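/- arXiv:1406.0689 — 3 statements merged into one kernel-verified Lean document; each statement's English description precedes it below -/
import Mathlib

section
/- The polynomial ν(x) = (1−x^2)^3 μ(x)^2 − 4·(1229/10000)·x^2·η(x)^3, where η(x) = 10x^6 + 6x^5 − 12x^4 − (11/2)x^3 + (29/8)x^2 + (11/8)x + 9/16 and μ(x) = η(x)η''(x) − (1/2)η'(x)^2, has no real zeros in the interval [0.65, 0.95]. -/
noncomputable def eta (x : ℝ) : ℝ :=
  10*x^6 + 6*x^5 - 12*x^4 - (11/2)*x^3 + (29/8)*x^2 + (11/8)*x + 9/16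

noncomputable def mu (x : ℝ) : ℝ :=
  eta x * deriv (deriv eta) x - (1/2) * (deriv eta x)^2

noncomputable def nu (x : ℝ) : ℝ :=
  (1 - x^2)^3 * (mu x)^2 - 4 * (1229/10000) * x^2 * (eta x)^3

/-!
Substituting `x = 13/20 + 3/10 * u` maps `[0.65, 0.95]` onto `[0, 1]`, and the degree-26
polynomial `u ↦ ν(13/20 + 3/10 * u)` has positive coefficients (all above 10) in the degree-26
Bernstein basis. Since the Bernstein basis polynomials are nonnegative on `[0, 1]` and sum to
`1`, `ν` is positive on the whole interval.
-/

open unitInterval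

theorem sum_mul_bernstein_pos {n : ℕ} {b : Fin (n + 1) → ℝ} (hb : ∀ k, 0 < b k) (x : I) :
    0 < ∑ k : Fin (n + 1), b k * bernstein n k x := by
  obtain ⟨k, -, hk⟩ : ∃ k : Fin (n + 1), k ∈ Finset.univ ∧ (0 : ℝ) < bernstein n k x :=
    Finset.exists_lt_of_sum_lt (by simp [bernstein.probability])
  exact Finset.sum_pos' (fun j _ => mul_nonneg (hb j).le bernstein_nonneg)
    ⟨k, Finset.mem_univ k, mul_pos (hb k) hk⟩

open Polynomial in
theorem eta_eq_eval : eta = fun x => (10 * X ^ 6 + 6 * X ^ 5 - 12 * X ^ 4 - C (11 / 2) * X ^ 3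
    + C (29 / 8) * X ^ 2 + C (11 / 8) * X + C (9 / 16) : ℝ[X]).eval x := by
  ext x
  simp only [_root_.eta, eval_add, eval_sub, eval_mul, eval_ofNat, eval_pow, eval_X, eval_C]

open Polynomial in
theorem deriv_polynomial_eval (p : ℝ[X]) :
    deriv (fun x => p.eval x) = fun x => p.derivative.eval x :=
  funext fun _ => p.deriv

open Polynomial in
theorem deriv_eta : deriv eta = fun x =>
    60 * x ^ 5 + 30 * x ^ 4 - 48 * x ^ 3 - 33 / 2 * x ^ 2 + 29 / 4 * x + 11 / 8 := by
  ext x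
  rw [eta_eq_eval, deriv_polynomial_eval]
  simp only [derivative_sub, derivative_mul, derivative_ofNat, derivative_C, derivative_X,
    derivative_X_pow_succ, zero_mul, zero_add, add_zero, mul_one, pow_one, map_add, map_one,
    Nat.cast_ofNat, Nat.cast_one, eval_add, eval_sub, eval_mul, eval_ofNat, eval_C, eval_one,
    eval_pow, eval_X]
  ring

open Polynomial in
theorem deriv_deriv_eta : deriv (deriv eta) = fun x =>
    300 * x ^ 4 + 120 * x ^ 3 - 144 * x ^ 2 - 33 * x + 29 / 4 := by
  ext x
  rw [eta_eq_eval, deriv_polynomial_eval, deriv_polynomial_eval]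
  simp only [derivative_sub, derivative_mul, derivative_ofNat, derivative_one, derivative_C,
    derivative_X, derivative_X_pow_succ, zero_mul, zero_add, add_zero, mul_one, pow_one, map_add,
    map_one, Nat.cast_ofNat, Nat.cast_one, eval_add, eval_sub, eval_mul, eval_ofNat, eval_C,
    eval_one, eval_pow, eval_X]
  ring

noncomputable def nuBernsteinCoeff : Fin 27 → ℝ := ![
    447745252081012927173870086639 / 41943040000000000000000000000,
    9088697020225944605317766946461 / 545259520000000000000000000000,
    5072120481328561498745257350907 / 209715200000000000000000000000,
    89962962488918361581437276768849 / 2726297600000000000000000000000,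
    2686203112669925772387712720245881 / 62704844800000000000000000000000,
    7369091375146528441420361197139657 / 137950658560000000000000000000000,
    62229787091703315570858215368609937 / 965654609920000000000000000000000,
    52168335545183919667988878409264749 / 689753292800000000000000000000000,
    1136731139084853275851746600567152137 / 13105312563200000000000000000000000,
    255677930080852770080881083630876491 / 2621062512640000000000000000000000,
    4807665376237800235955417966803869109 / 44558062714880000000000000000000000,
    476631330894287195731360453877526929 / 4050732974080000000000000000000000,
    2567517099492718273017674645194163371 / 20253664870400000000000000000000000,
    17338452062857921285487858129742211 / 128303759360000000000000000000000,
    2890087127996903532140578152072082363 / 20253664870400000000000000000000000,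
    120981839450427606196430136068630653 / 810146594816000000000000000000000,
    363200531003900099886544653056313607 / 2345161195520000000000000000000000,
    2084081748502541747832375978998972599 / 13105312563200000000000000000000000,
    2114737614571484016130205984470730617 / 13105312563200000000000000000000000,
    111249995556222865603287420469726861 / 689753292800000000000000000000000,
    152596127182702230686146791592250081 / 965654609920000000000000000000000,
    4157030765327667842071569544133749 / 27590131712000000000000000000000,
    8677624158083729679728086013887913 / 62704844800000000000000000000000,
    329165592225830811071420787173041 / 2726297600000000000000000000000,
    267780395460580771659133086342319 / 2726297600000000000000000000000,
    39677561695528710164704545170141 / 545259520000000000000000000000,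
    1979657928604440639151942338431 / 41943040000000000000000000000]

theorem nuBernsteinCoeff_pos (k : Fin 27) : 0 < nuBernsteinCoeff k := by
  fin_cases k <;> norm_num [nuBernsteinCoeff]

theorem nu_eq_sum_bernstein (u : I) :
    nu (13 / 20 + 3 / 10 * u) = ∑ k : Fin 27, nuBernsteinCoeff k * bernstein 26 k u := by
  simp only [Fin.sum_univ_succ, Fin.sum_univ_zero, bernstein_apply, nuBernsteinCoeff,
    Matrix.cons_val_zero, Matrix.cons_val_succ, Fin.val_zero, Fin.val_succ]
  norm_num only [Nat.choose_eq_descFactorial_div_factorial, Nat.descFactorial, Nat.factorial]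
  rw [nu, mu, deriv_deriv_eta, deriv_eta]
  simp only [eta]
  ring

theorem nu_no_zeros : ∀ x ∈ Set.Icc (0.65 : ℝ) 0.95, nu x ≠ 0 := by
  rintro x ⟨hx₁, hx₂⟩
  norm_num at hx₁ hx₂
  let u : I := ⟨10 / 3 * (x - 13 / 20), by constructor <;> linarith⟩
  have hx : x = 13 / 20 + 3 / 10 * u := by simp only [u]; ring
  rw [hx, nu_eq_sum_bernstein]
  exact (sum_mul_bernstein_pos nuBernsteinCoeff_pos u).ne'
end

section
/- For all x in the interval (5π/8, π), the inequality (820/33)(1 − cos(x/10)) ≤ 1 − cos(x) + (1/2)cos(2x) holds. -/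
/-!
Write `t = x / π`. On `[π/2, π]` Jordan's inequality for `sin (x - π/2)` gives `cos x ≤ 1 - 2t ≤ 1/2`,
and the right-hand side `(cos x - 1/2)² + 1/4` is antitone in `cos x` there, so it is at least
`(2t - 1/2)² + 1/4 = 2t² + 2(t - 1/2)² ≥ 2t²`. On the other side `1 - cos y ≤ y²/2` bounds the
left-hand side by `41 x² / 330`, which is below `2t²` because `π² ≤ 16 < 660/41`.
-/

open Real

lemma cos_le_one_sub_two_mul_div_pi {x : ℝ} (hx : π / 2 ≤ x) (hx' : x ≤ π) :
    cos x ≤ 1 - 2 * (x / π) := by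
  have hjordan := mul_le_sin (x := x - π / 2) (by linarith) (by linarith)
  rw [sin_sub_pi_div_two] at hjordan
  have : 2 / π * (x - π / 2) = 2 * (x / π) - 1 := by field_simp
  linarith

lemma one_sub_cos_add_half_cos_two_mul (x : ℝ) :
    1 - cos x + 1 / 2 * cos (2 * x) = (cos x - 1 / 2) ^ 2 + 1 / 4 := by
  rw [cos_two_mul]; ring

lemma two_mul_div_pi_sq_le_one_sub_cos_add_half_cos_two_mul {x : ℝ} (hx : π / 2 ≤ x)
    (hx' : x ≤ π) : 2 * (x / π) ^ 2 ≤ 1 - cos x + 1 / 2 * cos (2 * x) := by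
  have hcos := cos_le_one_sub_two_mul_div_pi hx hx'
  set t := x / π
  have ht : 1 / 2 ≤ t := by rw [le_div_iff₀ pi_pos]; linarith
  rw [one_sub_cos_add_half_cos_two_mul]
  nlinarith [sq_nonneg (t - 1 / 2)]

lemma one_sub_cos_le_sq_div_two (y : ℝ) : 1 - cos y ≤ y ^ 2 / 2 := by
  linarith [one_sub_sq_div_two_le_cos (x := y)]

theorem lemma7_n2 : ∀ x ∈ Set.Ioo (5 * π / 8) π,
    (820/33) * (1 - cos (x/10)) ≤ 1 - cos x + (1/2) * cos (2*x) := by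
  rintro x ⟨hlo, hhi⟩
  have hpi_sq : π ^ 2 ≤ 16 := by nlinarith [pi_pos, pi_le_four]
  calc (820/33) * (1 - cos (x/10))
      ≤ (820/33) * ((x/10) ^ 2 / 2) := by gcongr; exact one_sub_cos_le_sq_div_two _
    _ = 41 / 330 * x ^ 2 := by ring
    _ ≤ 2 * (x / π) ^ 2 := by
      rw [div_pow, mul_div_assoc', le_div_iff₀ (by positivity)]
      nlinarith [sq_nonneg x]
    _ ≤ 1 - cos x + (1/2) * cos (2*x) :=
      two_mul_div_pi_sq_le_one_sub_cos_add_half_cos_two_mul (by linarith [pi_pos]) hhi.le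
end

section
/- Define the polynomial X(Y) = 262144Y^20 − 1310720Y^18 + 2785280Y^16 − 3276800Y^14 + 2329600Y^12 − 1025536Y^10 + 275840Y^8 − 43360Y^6 + 3700Y^4 − 150Y^2 + (820/33)Y − 1475/66. Then X(Y) > 0 for all Y in [0.951, 0.981]. -/
noncomputable def X (Y : ℝ) : ℝ :=
  262144*Y^20 - 1310720*Y^18 + 2785280*Y^16 - 3276800*Y^14 + 2329600*Y^12
    - 1025536*Y^10 + 275840*Y^8 - 43360*Y^6 + 3700*Y^4 - 150*Y^2
    + (820/33)*Y - 1475/66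

theorem X_pos : ∀ Y ∈ Set.Icc (0.951 : ℝ) 0.981, X Y > 0 := by
  rintro Y ⟨h1, h2⟩
  have ht0 : (0:ℝ) ≤ Y - 0.951 := by linarith
  have ht1 : (0:ℝ) ≤ 0.03 - (Y - 0.951) := by norm_num; linarith
  unfold X
  nlinarith [mul_nonneg ht0 ht1, mul_nonneg (mul_nonneg ht0 ht0) ht1,
    pow_nonneg ht0 4, pow_nonneg ht0 5, pow_nonneg ht0 6, pow_nonneg ht0 7,
    pow_nonneg ht0 8, pow_nonneg ht0 9, pow_nonneg ht0 10, pow_nonneg ht0 11,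
    pow_nonneg ht0 12, pow_nonneg ht0 13, pow_nonneg ht0 14, pow_nonneg ht0 15,
    pow_nonneg ht0 16, pow_nonneg ht0 17, pow_nonneg ht0 18, pow_nonneg ht0 19,
    pow_nonneg ht0 20]
end
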